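/- Let G_κ(t,x) = (1/2)·1_{[−κt, κt]}(x) for t ≥ 0, κ > 0. Then for all t ≥ 0 and x, y ∈ ℝ, ∫₀ᵗ ∫_ℝ G_κ(t−s, x−z) G_κ(t−s, y−z) dz ds = (κ/4) · T_κ(t, x−y)², where T_κ(t,x) = (t − |x|/(2κ)) · 1_{|x| ≤ 2κt}. -/

import Mathlib

open Real MeasureTheory

/-- Wave kernel `G_κ(t,x) = (1/2)·1_{|x| ≤ κt}` for `t ≥ 0`, and `0` for `t < 0`. -/
noncomputable def waveKernel (κ t x : ℝ) : ℝ :=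
  if 0 ≤ t ∧ |x| ≤ κ * t then 1 / 2 else 0

/-- `T_κ(t,x) = (t − |x|/(2κ))·1_{|x| ≤ 2κt}`. -/
noncomputable def Tker (κ t x : ℝ) : ℝ :=
  if |x| ≤ 2 * κ * t then t - |x| / (2 * κ) else 0

/-!
For `r ≥ 0`, the product `G_κ(r, x - z) G_κ(r, y - z)` is `1/4` times the indicator of
`[x - κr, x + κr] ∩ [y - κr, y + κr]`, an interval of length `(2κr - |x - y|)⁺`. After the
substitution `r = t - s` the time integral is that of a ramp,
`(κ/2) ∫₀ᵗ (r - |x - y|/(2κ))⁺ dr = (κ/4) (t - |x - y|/(2κ))⁺² = (κ/4) T_κ(t, x - y)²`.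
-/

open Set

lemma waveKernel_sub_eq_indicator {r : ℝ} (hr : 0 ≤ r) (κ x z : ℝ) :
    waveKernel κ r (x - z) = (Icc (x - κ * r) (x + κ * r)).indicator (fun _ ↦ 1 / 2) z := by
  have hmem : |x - z| ≤ κ * r ↔ z ∈ Icc (x - κ * r) (x + κ * r) := by
    rw [abs_sub_le_iff, mem_Icc]; constructor <;> rintro ⟨h₁, h₂⟩ <;> constructor <;> linarith
  by_cases hz : z ∈ Icc (x - κ * r) (x + κ * r)
  · simp [waveKernel, hr, hmem.2 hz, hz]
  · simp [waveKernel, hmem, hz]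

lemma integral_waveKernel_mul_waveKernel {r : ℝ} (hr : 0 ≤ r) (κ x y : ℝ) :
    ∫ z, waveKernel κ r (x - z) * waveKernel κ r (y - z) = max (2 * κ * r - |x - y|) 0 / 4 := by
  simp_rw [waveKernel_sub_eq_indicator hr, ← inter_indicator_mul, Icc_inter_Icc]
  rw [integral_indicator_const _ measurableSet_Icc, volume_real_Icc, smul_eq_mul,
    min_add_add_right, max_sub_sub_right, ← max_sub_min_eq_abs']
  ring_nf

lemma Tker_eq_max {κ : ℝ} (hκ : 0 < κ) (t x : ℝ) : Tker κ t x = max (t - |x| / (2 * κ)) 0 := by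
  have hle : |x| ≤ 2 * κ * t ↔ 0 ≤ t - |x| / (2 * κ) := by
    rw [sub_nonneg, div_le_iff₀ (by positivity), mul_comm]
  unfold Tker
  split_ifs with h
  · exact (max_eq_left (hle.1 h)).symm
  · exact (max_eq_right (not_le.1 (mt hle.2 h)).le).symm

lemma integral_max_zero (u : ℝ) : ∫ r in (0 : ℝ)..u, max r 0 = max u 0 ^ 2 / 2 := by
  rcases le_total 0 u with hu | hu
  · have hid : EqOn (fun r : ℝ ↦ max r 0) id (uIcc 0 u) := by
      intro r hr
      exact max_eq_left (uIcc_of_le hu ▸ hr).1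
    rw [intervalIntegral.integral_congr hid, max_eq_left hu]
    simp
  · have hzero : EqOn (fun r : ℝ ↦ max r 0) 0 (uIcc 0 u) := by
      intro r hr
      exact max_eq_right (uIcc_of_ge hu ▸ hr).2
    simp [intervalIntegral.integral_congr hzero, max_eq_right hu]

lemma integral_max_sub_zero {b : ℝ} (hb : 0 ≤ b) (t : ℝ) :
    ∫ r in (0 : ℝ)..t, max (r - b) 0 = max (t - b) 0 ^ 2 / 2 := by
  have hint : ∀ u v : ℝ, IntervalIntegrable (fun r : ℝ ↦ max r 0) volume u v := fun u v ↦
    (continuous_id.max continuous_const).intervalIntegrable u v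
  rw [intervalIntegral.integral_comp_sub_right (fun r ↦ max r 0),
    ← intervalIntegral.integral_interval_sub_left (hint 0 _) (hint 0 _), integral_max_zero,
    integral_max_zero, zero_sub, max_eq_right (neg_nonpos.2 hb)]
  ring

theorem waveKernel_double_integral_mul (κ t x y : ℝ) (hκ : 0 < κ) (ht : 0 ≤ t) :
    ∫ s in (0:ℝ)..t, ∫ z : ℝ, waveKernel κ (t - s) (x - z) * waveKernel κ (t - s) (y - z)
      = κ / 4 * (Tker κ t (x - y)) ^ 2 := by
  have hinner : EqOn (fun s ↦ ∫ z : ℝ, waveKernel κ (t - s) (x - z) * waveKernel κ (t - s) (y - z))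
      (fun s ↦ κ / 2 * max (t - s - |x - y| / (2 * κ)) 0) (uIcc 0 t) := by
    intro s hs
    dsimp only
    have hscale : max (2 * κ * (t - s) - |x - y|) 0
        = 2 * κ * max (t - s - |x - y| / (2 * κ)) 0 := by
      rw [mul_max_of_nonneg _ _ (by positivity), mul_zero]
      field_simp
    rw [integral_waveKernel_mul_waveKernel (sub_nonneg.2 (uIcc_of_le ht ▸ hs).2), hscale]
    ring
  rw [intervalIntegral.integral_congr hinner, intervalIntegral.integral_const_mul,
    intervalIntegral.integral_comp_sub_left (fun r ↦ max (r - |x - y| / (2 * κ)) 0),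
    sub_self, sub_zero, integral_max_sub_zero (by positivity), Tker_eq_max hκ]
  ring
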